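/- Let V be a finite set, μ a probability measure on A^V with A finite, and let I be a uniformly random element of V. Then (1/|V|)·H(μ) = ∫_0^1 ∫ E_I[H_μ(σ_I | σ_{S \ {I}})] dθ_p(S) dp, where θ_p is the law of a random subset S ⊆ V containing each element of V independently with probability p. -/

import Mathlib

/-!
Put `h(S) = H(σ_S)`. Russo's formula for Bernoulli site percolation gives
`d/dp E_{θ_p}[h(S)] = Σ_v E_{θ_p}[h(S ∪ {v}) - h(S \ {v})]`, and by the chain rule
`h(S ∪ {v}) - h(S \ {v}) = H(σ_v | σ_{S \ {v}})`. Integrating over `p ∈ [0, 1]` leaves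
`h(V) - h(∅) = H(μ)`, as `σ_∅` carries no information when `μ` has total mass one.
-/

open scoped Classical BigOperators

noncomputable section

/-- Shannon entropy of a finitely supported probability vector (natural log,
with the convention `0 · log 0 = 0`, automatic since `Real.log 0 = 0`). -/
def shEnt {Ω : Type*} [Fintype Ω] (p : Ω → ℝ) : ℝ :=
  -∑ ω, p ω * Real.log (p ω)

/-- Marginal of a probability vector on `V → A` on the coordinates in `S`. -/
def marg {V A : Type*} [Fintype V] [Fintype A] (μ : (V → A) → ℝ) (S : Finset V) :
    ({x // x ∈ S} → A) → ℝ :=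
  fun η => ∑ x : V → A, if (∀ i : S, x i = η i) then μ x else 0

/-- Conditional Shannon entropy `H_μ(σ_v | σ_S)`, via the chain rule
`H(σ_{S ∪ {v}}) - H(σ_S)`. -/
def condEnt {V A : Type*} [Fintype V] [Fintype A] (μ : (V → A) → ℝ) (v : V)
    (S : Finset V) : ℝ :=
  shEnt (marg μ (insert v S)) - shEnt (marg μ S)

open Finset MeasureTheory

section Percolation

variable {V : Type*} [Fintype V]

def percolationWeight (p : ℝ) (S : Finset V) : ℝ :=
  p ^ S.card * (1 - p) ^ (Fintype.card V - S.card)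

lemma percolationWeight_one (S : Finset V) :
    percolationWeight 1 S = if S = univ then 1 else 0 := by
  split_ifs with hS
  · simp [percolationWeight, hS]
  · have : S.card < Fintype.card V := (card_lt_iff_ne_univ S).2 hS
    simp [percolationWeight, zero_pow (Nat.sub_ne_zero_of_lt this)]

lemma percolationWeight_zero (S : Finset V) :
    percolationWeight 0 S = if S = ∅ then 1 else 0 := by
  split_ifs with hS
  · simp [percolationWeight, hS]
  · simp [percolationWeight, zero_pow (card_ne_zero.2 (nonempty_iff_ne_empty.2 hS))]

lemma percolationWeight_erase_add (p : ℝ) {S : Finset V} {v : V} (hv : v ∈ S) :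
    percolationWeight p (S.erase v) + percolationWeight p S =
      p ^ (S.card - 1) * (1 - p) ^ (Fintype.card V - S.card) := by
  have hS : 0 < S.card := card_pos.2 ⟨v, hv⟩
  have hm : Fintype.card V - (S.card - 1) = Fintype.card V - S.card + 1 := by
    have := S.card_le_univ; omega
  rw [percolationWeight, percolationWeight, card_erase_of_mem hv, hm]
  generalize Fintype.card V - S.card = m
  obtain ⟨k, hk⟩ : ∃ k, S.card = k + 1 := ⟨S.card - 1, by omega⟩
  rw [hk, Nat.add_sub_cancel]
  ring

lemma percolationWeight_insert_add (p : ℝ) {S : Finset V} {v : V} (hv : v ∉ S) :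
    percolationWeight p (insert v S) + percolationWeight p S =
      p ^ S.card * (1 - p) ^ (Fintype.card V - S.card - 1) := by
  have hm : Fintype.card V - S.card = Fintype.card V - S.card - 1 + 1 := by
    have := (insert v S).card_le_univ; rw [card_insert_of_notMem hv] at this; omega
  rw [percolationWeight, percolationWeight, card_insert_of_notMem hv, Nat.sub_add_eq, hm,
    Nat.add_sub_cancel]
  ring

/-- Each vertex contributes the derivative of its own factor `p` or `1 - p` times the weight of
the other vertices, which is `θ_p(S \ {v}) + θ_p(S)` or `θ_p(S ∪ {v}) + θ_p(S)`. -/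
lemma hasDerivAt_percolationWeight (p : ℝ) (S : Finset V) :
    HasDerivAt (fun p => percolationWeight p S)
      (∑ v ∈ S, (percolationWeight p (S.erase v) + percolationWeight p S) -
        ∑ v ∈ Sᶜ, (percolationWeight p (insert v S) + percolationWeight p S)) p := by
  rw [sum_congr rfl fun v hv => percolationWeight_erase_add p hv,
    sum_congr rfl fun v hv => percolationWeight_insert_add p (mem_compl.1 hv),
    sum_const, sum_const, card_compl, nsmul_eq_mul, nsmul_eq_mul]
  refine ((hasDerivAt_pow S.card p).fun_mul
    (((hasDerivAt_id' p).const_sub 1).fun_pow (Fintype.card V - S.card))).congr_deriv ?_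
  ring

lemma sum_sum_mem_eq_sum_sum_compl_insert {β : Type*} [AddCommMonoid β]
    (F : Finset V → V → β) :
    ∑ S, ∑ v ∈ S, F S v = ∑ S, ∑ v ∈ Sᶜ, F (insert v S) v := by
  rw [sum_sigma', sum_sigma']
  refine sum_nbij' (fun a => ⟨a.1.erase a.2, a.2⟩) (fun a => ⟨insert a.2 a.1, a.2⟩)
    ?_ ?_ ?_ ?_ ?_ <;> rintro ⟨S, v⟩ hv <;> simp_all

lemma sum_insert_sub_erase_eq (h : Finset V → ℝ) (S : Finset V) :
    ∑ v, (h (insert v S) - h (S.erase v)) =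
      ∑ v ∈ S, (h S - h (S.erase v)) + ∑ v ∈ Sᶜ, (h (insert v S) - h S) := by
  rw [← sum_add_sum_compl S]
  congr 1
  · exact sum_congr rfl fun v hv => by rw [insert_eq_of_mem hv]
  · exact sum_congr rfl fun v hv => by rw [erase_eq_of_notMem (mem_compl.1 hv)]

theorem hasDerivAt_sum_percolationWeight_mul (h : Finset V → ℝ) (p : ℝ) :
    HasDerivAt (fun p => ∑ S, percolationWeight p S * h S)
      (∑ S, percolationWeight p S * ∑ v, (h (insert v S) - h (S.erase v))) p := by
  have swap_erase : ∑ S, ∑ v ∈ S, percolationWeight p (S.erase v) * h S =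
      ∑ S, ∑ v ∈ Sᶜ, percolationWeight p S * h (insert v S) := by
    rw [sum_sum_mem_eq_sum_sum_compl_insert]
    exact sum_congr rfl fun S _ => sum_congr rfl fun v hv => by
      rw [erase_insert (mem_compl.1 hv)]
  have swap_insert : ∑ S, ∑ v ∈ S, percolationWeight p S * h (S.erase v) =
      ∑ S, ∑ v ∈ Sᶜ, percolationWeight p (insert v S) * h S := by
    rw [sum_sum_mem_eq_sum_sum_compl_insert]
    exact sum_congr rfl fun S _ => sum_congr rfl fun v hv => by
      rw [erase_insert (mem_compl.1 hv)]
  refine (HasDerivAt.fun_sum fun S _ =>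
    (hasDerivAt_percolationWeight p S).mul_const (h S)).congr_deriv ?_
  simp only [sum_insert_sub_erase_eq]
  simp only [mul_add, mul_sub, sub_mul, add_mul, mul_sum, sum_mul,
    sum_add_distrib, sum_sub_distrib]
  linear_combination swap_erase + swap_insert

theorem integral_sum_percolationWeight_mul_sum_sub (h : Finset V → ℝ) :
    ∫ p in (0 : ℝ)..1, ∑ S, percolationWeight p S * ∑ v, (h (insert v S) - h (S.erase v)) =
      h univ - h ∅ := by
  have hcont : Continuous fun p => ∑ S : Finset V,
      percolationWeight p S * ∑ v, (h (insert v S) - h (S.erase v)) := by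
    unfold percolationWeight
    fun_prop
  rw [intervalIntegral.integral_eq_sub_of_hasDerivAt
    (fun p _ => hasDerivAt_sum_percolationWeight_mul h p) (hcont.intervalIntegrable 0 1)]
  simp [percolationWeight_one, percolationWeight_zero]

end Percolation

section Entropy

variable {A V : Type*} [Fintype A] [Fintype V]

lemma shEnt_comp_equiv {Ω Ω' : Type*} [Fintype Ω] [Fintype Ω'] (e : Ω ≃ Ω') (p : Ω' → ℝ) :
    shEnt (p ∘ e) = shEnt p := by
  simp only [shEnt, Function.comp_apply, e.sum_comp (fun ω => p ω * Real.log (p ω))]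

lemma marg_univ (μ : (V → A) → ℝ) :
    marg μ univ = μ ∘ (Equiv.subtypeUnivEquiv mem_univ).arrowCongr (Equiv.refl A) := by
  funext η
  have hcond (x : V → A) : (∀ i : (univ : Finset V), x i = η i) ↔
      x = (Equiv.subtypeUnivEquiv mem_univ).arrowCongr (Equiv.refl A) η := by
    simp [funext_iff, Equiv.arrowCongr]
  simp only [marg, hcond, sum_ite_eq', mem_univ, if_true, Function.comp_apply]

lemma marg_empty (μ : (V → A) → ℝ) : marg μ ∅ = fun _ => ∑ x, μ x := by
  funext η
  simp [marg]

lemma shEnt_marg_univ (μ : (V → A) → ℝ) : shEnt (marg μ univ) = shEnt μ := by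
  rw [marg_univ, shEnt_comp_equiv]

lemma shEnt_marg_empty {μ : (V → A) → ℝ} (hsum : ∑ x, μ x = 1) : shEnt (marg μ ∅) = 0 := by
  simp [shEnt, marg_empty, hsum]

lemma condEnt_erase (μ : (V → A) → ℝ) (v : V) (S : Finset V) :
    condEnt μ v (S.erase v) = shEnt (marg μ (insert v S)) - shEnt (marg μ (S.erase v)) := by
  rw [condEnt, show insert v (S.erase v) = insert v S by grind]

end Entropy

theorem percolative_entropy_identity_general {A V : Type*} [Fintype A]
    [Fintype V] (μ : (V → A) → ℝ)
    (hsum : ∑ x, μ x = 1) :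
    (1 / (Fintype.card V : ℝ)) * shEnt μ =
      ∫ p in (0:ℝ)..1,
        ∑ S : Finset V,
          p ^ S.card * (1 - p) ^ (Fintype.card V - S.card) *
            ((1 / (Fintype.card V : ℝ)) * ∑ v : V, condEnt μ v (S.erase v)) := by
  have key := integral_sum_percolationWeight_mul_sum_sub fun S => shEnt (marg μ S)
  simp only [← condEnt_erase, shEnt_marg_univ, shEnt_marg_empty hsum, sub_zero] at key
  rw [← key, ← intervalIntegral.integral_const_mul]
  refine intervalIntegral.integral_congr fun p _ => ?_
  rw [mul_sum]
  exact sum_congr rfl fun S _ => by rw [percolationWeight]; ring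

/-- `(1/|V|)·H(μ) = ∫_0^1 ∫ E_I[H_μ(σ_I | σ_{S\{I}})] dθ_p(S) dp`,
where `θ_p(S) = p^{|S|}(1-p)^{|V|-|S|}` is Bernoulli(p) site percolation on `V`
and `I` is a uniformly random vertex. -/
theorem percolative_entropy_identity {A V : Type*} [Fintype A] [Nonempty A]
    [Fintype V] [Nonempty V] (μ : (V → A) → ℝ)
    (hpos : ∀ x, 0 ≤ μ x) (hsum : ∑ x, μ x = 1) :
    (1 / (Fintype.card V : ℝ)) * shEnt μ =
      ∫ p in (0:ℝ)..1,
        ∑ S : Finset V,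
          p ^ S.card * (1 - p) ^ (Fintype.card V - S.card) *
            ((1 / (Fintype.card V : ℝ)) * ∑ v : V, condEnt μ v (S.erase v)) :=
  percolative_entropy_identity_general μ hsum
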